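/- Let b, σ : ℝ² → ℝ be locally Lipschitz with σ(x) ≠ 0 for all x ∈ ℝ². Then for every pair x, y ∈ ℝ² and every T > 0 there exists a function ψ = (φ, φ') : [0,T] → ℝ², with φ : [0,T] → ℝ having an absolutely continuous derivative, such that ψ(0) = x, ψ(T) = y and I_x^T(ψ) < ∞. Consequently the quasipotential satisfies 𝕍(x, y) < ∞ for all x, y ∈ ℝ². -/
import Mathlib


open MeasureTheory
open scoped ENNReal

/-- The Freidlin–Wentzell action `I_x^T(ψ)` for the degenerate second-order system
`y₁' = y₂`, `y₂' = b(y₁,y₂) + √ε σ(y₁,y₂) Ḃ`: it equals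
`(1/2)∫₀ᵀ |(φ''(s) − b(φ,φ'))/σ(φ,φ')|² ds` if `ψ = (φ,φ')` with `φ'` absolutely
continuous and `ψ(0) = x`, and `+∞` otherwise (as `sInf ∅ = ⊤`). -/
noncomputable def action2 (b σ : ℝ × ℝ → ℝ) (T : ℝ) (x : ℝ × ℝ) (ψ : ℝ → ℝ × ℝ) : ℝ≥0∞ :=
  sInf { c : ℝ≥0∞ | ∃ g : ℝ → ℝ,
    IntegrableOn g (Set.Icc 0 T) ∧
    ψ 0 = x ∧
    (∀ t ∈ Set.Icc 0 T, (ψ t).2 = x.2 + ∫ s in Set.Ioc 0 t, g s) ∧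
    (∀ t ∈ Set.Icc 0 T, (ψ t).1 = x.1 + ∫ s in Set.Ioc 0 t, (ψ s).2) ∧
    c = ENNReal.ofReal ((1 / 2) * ∫ s in Set.Ioc 0 T, ((g s - b (ψ s)) / σ (ψ s)) ^ 2) }

/-- The quasipotential `𝕍(x,y) = inf { I_x^T(ψ) : T > 0, ψ(0) = x, ψ(T) = y }`. -/
noncomputable def quasipotential2 (b σ : ℝ × ℝ → ℝ) (x y : ℝ × ℝ) : ℝ≥0∞ :=
  sInf { c : ℝ≥0∞ | ∃ T > (0:ℝ), ∃ ψ : ℝ → ℝ × ℝ,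
    ψ 0 = x ∧ ψ T = y ∧ c = action2 b σ T x ψ }

lemma poly_int1 (a c t : ℝ) (ht : 0 ≤ t) :
    (∫ s in Set.Ioc 0 t, (2*a + 6*c*s)) = 2*a*t + 3*c*t^2 := by
  rw [← intervalIntegral.integral_of_le ht]
  have h1 : IntervalIntegrable (fun _ : ℝ => 2*a) volume 0 t :=
    (continuous_const).intervalIntegrable _ _
  have h2 : IntervalIntegrable (fun s : ℝ => 6*c*s) volume 0 t :=
    (by continuity : Continuous fun s : ℝ => 6*c*s).intervalIntegrable _ _
  rw [intervalIntegral.integral_add h1 h2, intervalIntegral.integral_const,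
    intervalIntegral.integral_const_mul, integral_id, smul_eq_mul]
  ring

lemma poly_int2 (x2 a c t : ℝ) (ht : 0 ≤ t) :
    (∫ s in Set.Ioc 0 t, (x2 + 2*a*s + 3*c*s^2)) = x2*t + a*t^2 + c*t^3 := by
  rw [← intervalIntegral.integral_of_le ht]
  have h1 : IntervalIntegrable (fun s : ℝ => x2 + 2*a*s) volume 0 t :=
    (by continuity : Continuous fun s : ℝ => x2 + 2*a*s).intervalIntegrable _ _
  have h2 : IntervalIntegrable (fun s : ℝ => 3*c*s^2) volume 0 t :=
    (by continuity : Continuous fun s : ℝ => 3*c*s^2).intervalIntegrable _ _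
  have h3 : IntervalIntegrable (fun _ : ℝ => x2) volume 0 t :=
    (continuous_const).intervalIntegrable _ _
  have h4 : IntervalIntegrable (fun s : ℝ => 2*a*s) volume 0 t :=
    (by continuity : Continuous fun s : ℝ => 2*a*s).intervalIntegrable _ _
  rw [intervalIntegral.integral_add h1 h2, intervalIntegral.integral_add h3 h4,
    intervalIntegral.integral_const, intervalIntegral.integral_const_mul,
    intervalIntegral.integral_const_mul, integral_id,
    integral_pow, smul_eq_mul]
  ring

/-- For locally Lipschitz `b, σ` with `σ` nonvanishing, any two points
of `ℝ²` can be joined in any time `T > 0` by a path of finite action; consequently the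
quasipotential is finite everywhere. -/
theorem action_finite_and_quasipotential_finite
    (b σ : ℝ × ℝ → ℝ) (hb : LocallyLipschitz b) (hσ : LocallyLipschitz σ)
    (hσ0 : ∀ x, σ x ≠ 0) :
    (∀ x y : ℝ × ℝ, ∀ T > (0:ℝ), ∃ ψ : ℝ → ℝ × ℝ,
      ψ 0 = x ∧ ψ T = y ∧ action2 b σ T x ψ < ⊤) ∧
    (∀ x y : ℝ × ℝ, quasipotential2 b σ x y < ⊤) := by
  have key : ∀ x y : ℝ × ℝ, ∀ T > (0:ℝ), ∃ ψ : ℝ → ℝ × ℝ,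
      ψ 0 = x ∧ ψ T = y ∧ action2 b σ T x ψ < ⊤ := by
    intro x y T hT
    set a : ℝ := (3*(y.1 - x.1 - x.2*T) - (y.2 - x.2)*T)/T^2 with ha
    set c : ℝ := ((y.2 - x.2)*T - 2*(y.1 - x.1 - x.2*T))/T^3 with hc
    set ψ : ℝ → ℝ × ℝ :=
      fun t => (x.1 + x.2*t + a*t^2 + c*t^3, x.2 + 2*a*t + 3*c*t^2) with hψ
    have hψ0 : ψ 0 = x := by simp [hψ]
    have hψT : ψ T = y := by
      have hT0 : T ≠ 0 := ne_of_gt hT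
      simp only [hψ, ha, hc]
      ext <;> · simp only; field_simp; ring
    refine ⟨ψ, hψ0, hψT, ?_⟩
    set g : ℝ → ℝ := fun s => 2*a + 6*c*s with hg
    have hmem : ENNReal.ofReal ((1 / 2) * ∫ s in Set.Ioc 0 T,
        ((g s - b (ψ s)) / σ (ψ s)) ^ 2) ∈
        { cc : ℝ≥0∞ | ∃ g' : ℝ → ℝ,
          IntegrableOn g' (Set.Icc 0 T) ∧
          ψ 0 = x ∧
          (∀ t ∈ Set.Icc 0 T, (ψ t).2 = x.2 + ∫ s in Set.Ioc 0 t, g' s) ∧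
          (∀ t ∈ Set.Icc 0 T, (ψ t).1 = x.1 + ∫ s in Set.Ioc 0 t, (ψ s).2) ∧
          cc = ENNReal.ofReal ((1 / 2) * ∫ s in Set.Ioc 0 T,
            ((g' s - b (ψ s)) / σ (ψ s)) ^ 2) } := by
      refine ⟨g, ?_, hψ0, ?_, ?_, rfl⟩
      · exact ((by continuity : Continuous g).continuousOn.integrableOn_compact isCompact_Icc)
      · intro t ht
        simp only [hψ]
        rw [poly_int1 a c t ht.1]
        ring
      · intro t ht
        simp only [hψ]
        rw [poly_int2 x.2 a c t ht.1]
        ring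
    calc action2 b σ T x ψ ≤ _ := sInf_le hmem
      _ < ⊤ := ENNReal.ofReal_lt_top
  refine ⟨key, fun x y => ?_⟩
  obtain ⟨ψ, h0, h1, hfin⟩ := key x y 1 one_pos
  calc quasipotential2 b σ x y ≤ action2 b σ 1 x ψ :=
        sInf_le ⟨1, one_pos, ψ, h0, h1, rfl⟩
    _ < ⊤ := hfin
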